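/- Let r be an odd prime with r ≠ 5 and let V be the deleted permutation module over ZMod r. Then V is irreducible as a module for the alternating group Y = alternatingGroup (Fin 5): the only Y-invariant ZMod r-subspaces of V are 0 and V itself. -/

import Mathlib

/-- The deleted permutation module: functions `Fin 5 → ZMod r` summing to zero. -/
def V (r : ℕ) : Submodule (ZMod r) (Fin 5 → ZMod r) where
  carrier := {f | ∑ i, f i = 0}
  add_mem' := by
    intro a b ha hb
    simp only [Set.mem_setOf_eq, Pi.add_apply, Finset.sum_add_distrib] at *
    rw [ha, hb, add_zero]
  zero_mem' := by simp
  smul_mem' := by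
    intro c f hf
    simp only [Set.mem_setOf_eq, Pi.smul_apply, smul_eq_mul, ← Finset.mul_sum] at *
    rw [hf, mul_zero]

/-- The permutation action of `Equiv.Perm (Fin 5)` on `V r`, given by `σ • f = f ∘ σ⁻¹`. -/
def rho (r : ℕ) : Representation (ZMod r) (Equiv.Perm (Fin 5)) (V r) where
  toFun σ :=
    { toFun := fun f => ⟨fun i => (f : Fin 5 → ZMod r) (σ⁻¹ i),
        (Equiv.sum_comp σ⁻¹ (f : Fin 5 → ZMod r)).trans f.2⟩
      map_add' := fun _ _ => rfl
      map_smul' := fun _ _ => rfl }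
  map_one' := rfl
  map_mul' := fun _ _ => rfl

/-! A nonzero invariant subspace `U` contains a vector `f` that is not constant: the constant
vector with value `x` lies in `V` only if `5 * x = 0`, and `5` is a unit mod `r`. By
2-transitivity of `Alt(5)` we may assume `f 0 ≠ f 1`; then `(1 - c)(1 + b)(1 - a)` with
`a = (0 1)(2 3)`, `b = (2 3)(1 4)`, `c = (1 4)(4 2)` sends `f` to `(f 0 - f 1) • (e₂ - e₁)`.
Hence `e₂ - e₁ ∈ U`, so by 2-transitivity again every `eₚ - e_q` lies in `U`, and these span
`V`. -/

lemma sum_smul_single_sub_single {ι R : Type*} [Fintype ι] [DecidableEq ι] [Ring R]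
    (f : ι → R) (j : ι) :
    ∑ i, f i • (Pi.single i 1 - Pi.single j 1 : ι → R) = f - (∑ i, f i) • Pi.single j 1 := by
  simp only [smul_sub, Finset.sum_sub_distrib, ← Finset.sum_smul]
  simp only [← Pi.single_smul, smul_eq_mul, mul_one, Finset.univ_sum_single]

lemma exists_apply_ne_of_sum_eq_zero {ι R : Type*} [Fintype ι] [Semiring R] [NoZeroDivisors R]
    {f : ι → R} (hcard : (Fintype.card ι : R) ≠ 0) (hsum : ∑ i, f i = 0) (hf : f ≠ 0) :
    ∃ i j, f i ≠ f j := by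
  obtain ⟨i, hi⟩ := Function.ne_iff.1 hf
  by_contra! hconst
  have : (Fintype.card ι : R) * f i = 0 := by
    simpa [hconst _ i] using hsum
  exact hi ((mul_eq_zero.1 this).resolve_left hcard)

lemma alternatingGroup.exists_mem_apply_eq_apply_eq {α : Type*} [Fintype α] [DecidableEq α]
    (hα : 4 ≤ Nat.card α) {a b c d : α} (hab : a ≠ b) (hcd : c ≠ d) :
    ∃ σ ∈ alternatingGroup α, σ a = c ∧ σ b = d := by
  have := alternatingGroup.isMultiplyPretransitive α
  have : MulAction.IsMultiplyPretransitive (alternatingGroup α) α 2 :=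
    MulAction.isMultiplyPretransitive_of_le (n := Nat.card α - 2) (by omega) (by omega)
  obtain ⟨σ, hσa, hσb⟩ := MulAction.is_two_pretransitive_iff.1 this hab hcd
  exact ⟨σ, σ.2, hσa, hσb⟩

namespace V

variable {r : ℕ}

def singleSub (r : ℕ) (i j : Fin 5) : V r :=
  ⟨Pi.single i 1 - Pi.single j 1, by
    show ∑ _, _ = 0
    simp [Finset.sum_sub_distrib]⟩

lemma rho_apply (σ : Equiv.Perm (Fin 5)) (x : V r) (p : Fin 5) :
    (rho r σ x : Fin 5 → ZMod r) p = (x : Fin 5 → ZMod r) (σ⁻¹ p) := rfl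

lemma rho_singleSub (σ : Equiv.Perm (Fin 5)) (i j : Fin 5) :
    rho r σ (singleSub r i j) = singleSub r (σ i) (σ j) := by
  ext p
  simp [rho_apply, singleSub, Pi.single_apply, Equiv.symm_apply_eq]

lemma singleSub_self (i : Fin 5) : singleSub r i i = 0 := by
  ext; simp [singleSub]

lemma eq_sum_smul_singleSub (x : V r) (j : Fin 5) :
    x = ∑ i, (x : Fin 5 → ZMod r) i • singleSub r i j := by
  ext1
  have hx : ∑ i, (x : Fin 5 → ZMod r) i = 0 := x.2
  simp only [Submodule.coe_sum, Submodule.coe_smul, singleSub, sum_smul_single_sub_single, hx,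
    zero_smul, sub_zero]

lemma eq_top_of_forall_singleSub_mem (U : Submodule (ZMod r) (V r))
    (h : ∀ i j, singleSub r i j ∈ U) : U = ⊤ :=
  (Submodule.eq_top_iff' (p := U)).2 fun x =>
    eq_sum_smul_singleSub x 0 ▸ U.sum_mem fun i _ => U.smul_mem _ (h i 0)

lemma sub_smul_singleSub_mem {U : Submodule (ZMod r) (V r)}
    (hU : ∀ σ ∈ alternatingGroup (Fin 5), ∀ f ∈ U, rho r σ f ∈ U) {f : V r} (hf : f ∈ U) :
    ((f : Fin 5 → ZMod r) 0 - (f : Fin 5 → ZMod r) 1) • singleSub r 2 1 ∈ U := by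
  set g := f - rho r (Equiv.swap 0 1 * Equiv.swap 2 3) f
  have hg : g ∈ U := U.sub_mem hf (hU _ (by simp) f hf)
  set w := g + rho r (Equiv.swap 2 3 * Equiv.swap 1 4) g
  have hw : w ∈ U := U.add_mem hg (hU _ (by simp) g hg)
  convert U.sub_mem hw (hU (Equiv.swap 1 4 * Equiv.swap 4 2) (by simp) w hw) using 1
  ext p
  fin_cases p <;> simp [g, w, rho_apply, singleSub, Equiv.swap_apply_def]

lemma singleSub_mem_of_apply_ne [Fact r.Prime] {U : Submodule (ZMod r) (V r)}
    (hU : ∀ σ ∈ alternatingGroup (Fin 5), ∀ f ∈ U, rho r σ f ∈ U) {f : V r} (hf : f ∈ U)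
    {i j : Fin 5} (hij : (f : Fin 5 → ZMod r) i ≠ (f : Fin 5 → ZMod r) j) (p q : Fin 5) :
    singleSub r p q ∈ U := by
  have h5 : 4 ≤ Nat.card (Fin 5) := by simp
  obtain ⟨σ, hσ, hσ0, hσ1⟩ := alternatingGroup.exists_mem_apply_eq_apply_eq h5
    (a := 0) (b := 1) (by decide) (ne_of_apply_ne _ hij)
  have h21 : singleSub r 2 1 ∈ U := by
    have := sub_smul_singleSub_mem hU (hU _ (inv_mem hσ) f hf)
    rwa [rho_apply, rho_apply, inv_inv, hσ0, hσ1, Submodule.smul_mem_iff _ (sub_ne_zero.2 hij)]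
      at this
  rcases eq_or_ne p q with rfl | hpq
  · exact singleSub_self (r := r) p ▸ U.zero_mem
  obtain ⟨π, hπ, hπ2, hπ1⟩ := alternatingGroup.exists_mem_apply_eq_apply_eq h5
    (a := 2) (b := 1) (by decide) hpq
  rw [← hπ2, ← hπ1, ← rho_singleSub]
  exact hU π hπ _ h21

end V

theorem deleted_permutation_module_irreducible_general
    (r : ℕ) (hr : r.Prime) (hr5 : r ≠ 5)
    (U : Submodule (ZMod r) (V r))
    (hU : ∀ σ ∈ alternatingGroup (Fin 5), ∀ f ∈ U, rho r σ f ∈ U) :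
    U = ⊥ ∨ U = ⊤ := by
  have : Fact r.Prime := ⟨hr⟩
  refine or_iff_not_imp_left.2 fun hbot => ?_
  obtain ⟨f, hfU, hf0⟩ := (Submodule.ne_bot_iff U).1 hbot
  have h5 : (Fintype.card (Fin 5) : ZMod r) ≠ 0 := by
    rw [Fintype.card_fin, Ne, ZMod.natCast_eq_zero_iff]
    exact fun h => hr5 ((Nat.prime_dvd_prime_iff_eq hr Nat.prime_five).1 h)
  obtain ⟨i, j, hij⟩ := exists_apply_ne_of_sum_eq_zero h5 f.2 fun h => hf0 (Subtype.ext h)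
  exact V.eq_top_of_forall_singleSub_mem U (V.singleSub_mem_of_apply_ne hU hfU hij)

/-- For any odd prime `r ≠ 5`, the deleted permutation module `V` over `ZMod r` is an
irreducible module for the alternating group `Alt(5)`: its only invariant subspaces
are `0` and `V`. -/
theorem deleted_permutation_module_irreducible
    (r : ℕ) (hr : r.Prime) (hodd : Odd r) (hr5 : r ≠ 5)
    (U : Submodule (ZMod r) (V r))
    (hU : ∀ σ ∈ alternatingGroup (Fin 5), ∀ f ∈ U, rho r σ f ∈ U) :
    U = ⊥ ∨ U = ⊤ :=
  deleted_permutation_module_irreducible_general r hr hr5 U hU
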